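/- arXiv:2302.14481 — 2 statements merged into one kernel-verified Lean document; each statement's English description precedes it below -/
import Mathlib

section
/- Let η be a substitution and u ∈ A^ℤ a two-sided periodic point of η with growing seed s = u_{-1}|u_0. Then for every n ∈ ℤ, the letter u_n equals A_{η,s}(rep_u(n)), the state reached by the automaton A_{η,s} after reading the representation of n. In other words, the two-sided periodic point u is automatic with respect to the Dumont–Thomas complement numeration system rep_u. -/
open Filter List

variable {A : Type*}

/-- A substitution applied to a word: concatenation of the images of its letters. -/
def substW (η : A → List A) (w : List A) : List A := (w.map η).flatten

/-- The `k`-th iterate of a substitution applied to a word. -/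
def iterW (η : A → List A) (k : ℕ) (w : List A) : List A := (substW η)^[k] w

/-- `η` is a substitution: nonempty images and at least one growing letter. -/
def IsSubstitution (η : A → List A) : Prop :=
  (∀ c, η c ≠ []) ∧ ∃ a, Tendsto (fun k => (iterW η k [a]).length) atTop atTop

/-- `(m i, a i)` for `i = 0, …, len-1` is an `x`-admissible sequence:
`m (i) ++ [a i]` is a prefix of `η (a (i+1))` and `m (len-1) ++ [a (len-1)]`
is a prefix of `η x`. -/
def AdmSeq (η : A → List A) (len : ℕ) (m : ℕ → List A) (a : ℕ → A) (x : A) : Prop :=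
  (∀ i, i + 1 < len → (m i ++ [a i]) <+: η (a (i + 1))) ∧
  (1 ≤ len → (m (len - 1) ++ [a (len - 1)]) <+: η x)

/-- `Σ_{j<k} |η^j(m_j)|`. -/
def sumLen (η : A → List A) (k : ℕ) (m : ℕ → List A) : ℕ :=
  ∑ j ∈ Finset.range k, (iterW η j (m j)).length

/-- `η^{k-1}(m_{k-1}) η^{k-2}(m_{k-2}) ⋯ η^0(m_0)`. -/
def concatDT (η : A → List A) (k : ℕ) (m : ℕ → List A) : List A :=
  ((List.range k).reverse.map (fun j => iterW η j (m j))).flatten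

/-- The digit word `|m_{k-1}| ⊙ |m_{k-2}| ⊙ ⋯ ⊙ |m_0|`. -/
def dtDigits (k : ℕ) (m : ℕ → List A) : List ℕ :=
  (List.range k).reverse.map (fun j => (m j).length)

/-- Partial run of the automaton `A_{η,x}`: from state `x`, the digit `d`
moves to the `d`-th letter of `η x` when `d < |η x|`. -/
def run (η : A → List A) : List ℕ → A → Option A
  | [], x => some x
  | d :: w, x => if h : d < (η x).length then run η w ((η x)[d]) else none

/-- `u` restricted to nonnegative positions is a periodic point of `η` of period `p`:
every `η^p`-image of a prefix of `u` is again a prefix of `u`. -/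
def RightPer (η : A → List A) (p : ℕ) (u : ℤ → A) : Prop :=
  ∀ n : ℕ, ∀ j : ℕ, j < (iterW η p (List.ofFn (fun i : Fin (n+1) => u i))).length →
    (iterW η p (List.ofFn (fun i : Fin (n+1) => u i)))[j]? = some (u j)

/-- `u` restricted to negative positions is a periodic point of `η` of period `p`:
every `η^p`-image of a suffix `u_{-(n+1)} ⋯ u_{-1}` of the left part is again a
suffix of the left part of `u`. -/
def LeftPer (η : A → List A) (p : ℕ) (u : ℤ → A) : Prop :=
  ∀ n : ℕ, ∀ j : ℕ,
    j < (iterW η p (List.ofFn (fun i : Fin (n+1) => u ((i : ℤ) - (n+1))))).length →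
    (iterW η p (List.ofFn (fun i : Fin (n+1) => u ((i : ℤ) - (n+1)))))[j]? =
      some (u ((j : ℤ) -
        (iterW η p (List.ofFn (fun i : Fin (n+1) => u ((i : ℤ) - (n+1))))).length))

/-- `u : ℤ → A` is a two-sided periodic point of `η` of period `p ≥ 1` with
growing seed `u₋₁ | u₀`. -/
def TwoSidedPerPoint (η : A → List A) (p : ℕ) (u : ℤ → A) : Prop :=
  1 ≤ p ∧ RightPer η p u ∧ LeftPer η p u ∧
  Tendsto (fun k => (iterW η k [u 0]).length) atTop atTop ∧
  Tendsto (fun k => (iterW η k [u (-1)]).length) atTop atTop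

/-- The Dumont–Thomas decomposition data of a positive integer `n` with respect to
the letter `x` (Theorem of Dumont–Thomas for the right-infinite part):
`p ∣ k`, `p ≤ k`, the sequence is `x`-admissible, `m_{k-1} ⋯ m_{k-p} ≠ ε` and
`Σ_{j<k} |η^j(m_j)| = n`. -/
def PosSpec (η : A → List A) (p : ℕ) (x : A) (n : ℤ) (k : ℕ) (m : ℕ → List A)
    (a : ℕ → A) : Prop :=
  p ∣ k ∧ p ≤ k ∧ AdmSeq η k m a x ∧ (∃ i, i < p ∧ m (k - 1 - i) ≠ []) ∧
  (sumLen η k m : ℤ) = n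

/-- The Dumont–Thomas decomposition data of an integer `n ≤ -2` with respect to
the letter `b` (Theorem of Dumont–Thomas for the left-infinite part). -/
def NegSpec (η : A → List A) (p : ℕ) (b : A) (n : ℤ) (k : ℕ) (m : ℕ → List A)
    (a : ℕ → A) : Prop :=
  p ∣ k ∧ p ≤ k ∧ AdmSeq η k m a b ∧
  ((List.range p).map (fun i => iterW η (p - 1 - i) (m (k - 1 - i)))).flatten
      ++ [a (k - p)] ≠ iterW η p [b] ∧
  (sumLen η k m : ℤ) = n + (iterW η k [b]).length

/-- `w` is the Dumont–Thomas complement representation `rep_u(n)` of `n ∈ ℤ`. -/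
def RepSpec (η : A → List A) (p : ℕ) (u : ℤ → A) (n : ℤ) (w : List ℕ) : Prop :=
  (n = 0 ∧ w = [0]) ∨ (n = -1 ∧ w = [1]) ∨
  (1 ≤ n ∧ ∃ k m a, PosSpec η p (u 0) n k m a ∧ w = 0 :: dtDigits k m) ∨
  (n ≤ -2 ∧ ∃ k m a, NegSpec η p (u (-1)) n k m a ∧ w = 1 :: dtDigits k m)

/-- Run of the automaton `A_{η,s}` with initial state `start`: the first digit
`0` (resp. `1`) moves to `u 0` (resp. `u (-1)`). -/
def runSeed (η : A → List A) (u : ℤ → A) : List ℕ → Option A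
  | [] => none
  | d :: w => if d = 0 then run η w (u 0) else if d = 1 then run η w (u (-1)) else none

/-- `|η^{k-p-1}(m_{k-1}) ⋯ η^0(m_p)|`, the `u`-quotient of a positive integer. -/
def uQuotPos (η : A → List A) (p k : ℕ) (m : ℕ → List A) : ℤ :=
  ∑ j ∈ Finset.range (k - p), ((iterW η j (m (j + p))).length : ℤ)

/-- `w = tail_{η,p,x}(n)`: the digit word of the unique `x`-admissible sequence of
length `p` whose length-sum is `n`. -/
def TailSpec (η : A → List A) (p : ℕ) (x : A) (n : ℕ) (w : List ℕ) : Prop :=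
  ∃ m a, AdmSeq η p m a x ∧ sumLen η p m = n ∧ w = dtDigits p m

/-- Radix order: shorter words first, ties broken lexicographically. -/
def radLt (v w : List ℕ) : Prop :=
  v.length < w.length ∨ (v.length = w.length ∧ List.Lex (· < ·) v w)

/-- Reversed-radix order: longer words first, ties broken lexicographically. -/
def revLt (v w : List ℕ) : Prop :=
  w.length < v.length ∨ (v.length = w.length ∧ List.Lex (· < ·) v w)

/-- The total order `≺` on `{0,1}D*`. -/
def precLt (v w : List ℕ) : Prop :=
  (v.head? = some 1 ∧ w.head? = some 0) ∨
  (v.head? = some 0 ∧ w.head? = some 0 ∧ radLt v w) ∨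
  (v.head? = some 1 ∧ w.head? = some 1 ∧ revLt v w)

/-- The base-2 value `Σ_{i<k} w_i 2^i` of the word `w = w_{k-1} ⋯ w_0`. -/
def natVal2 (w : List ℕ) : ℕ := w.foldl (fun acc d => 2 * acc + d) 0

/-- The two's complement value `Σ_{i<k} w_i 2^i − w_{k-1} 2^k`. -/
def val2c (w : List ℕ) : ℤ := (natVal2 w : ℤ) - (w.headI : ℤ) * 2 ^ w.length

/-- Fibonacci numbers with `F 0 = 1`, `F 1 = 2`. -/
def fib2 : ℕ → ℕ
  | 0 => 1
  | 1 => 2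
  | n + 2 => fib2 (n + 1) + fib2 n

/-- The Fibonacci complement value `Σ_{i<k} w_i F_i − w_{k-1} F_k`
of the word `w = w_{k-1} ⋯ w_0`. -/
def valFc (w : List ℕ) : ℤ :=
  (∑ i ∈ Finset.range w.length, (w.reverse.getD i 0 : ℤ) * fib2 i) -
    (w.headI : ℤ) * fib2 w.length

/-!
Reading the digits `|m_{k-1}|, …, |m_0|` of an admissible sequence, the automaton descends the
derivation tree of `η^k(x)` and stops at the letter `a_0`, which sits at position
`Σ_{j<k} |η^j(m_j)|` of `η^k(x)`. As `p ∣ k`, the word `η^k(u_0)` is a prefix of the right half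
of `u` and `η^k(u_{-1})` a suffix of its left half, so that letter is `u_n`.
-/

section Substitution

variable (η : A → List A)

lemma substW_append (v w : List A) : substW η (v ++ w) = substW η v ++ substW η w := by
  simp [substW]

lemma iterW_append (k : ℕ) (v w : List A) :
    iterW η k (v ++ w) = iterW η k v ++ iterW η k w := by
  induction k generalizing v w with
  | zero => rfl
  | succ k ih => simp only [iterW, Function.iterate_succ_apply] at ih ⊢; rw [substW_append, ih]

lemma iterW_nil (k : ℕ) : iterW η k [] = [] :=
  Function.iterate_fixed (by simp [substW]) k

lemma iterW_succ_singleton (k : ℕ) (x : A) : iterW η (k + 1) [x] = iterW η k (η x) := by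
  simp [iterW, Function.iterate_succ_apply, substW]

lemma iterW_mul (p t : ℕ) : iterW η (p * t) = (iterW η p)^[t] :=
  funext fun _ => congrFun (Function.iterate_mul (substW η) p t) _

lemma iterW_isPrefix (k : ℕ) {v w : List A} (h : v <+: w) : iterW η k v <+: iterW η k w := by
  obtain ⟨t, rfl⟩ := h
  exact ⟨iterW η k t, (iterW_append η k v t).symm⟩

lemma concatDT_succ (k : ℕ) (m : ℕ → List A) :
    concatDT η (k + 1) m = iterW η k (m k) ++ concatDT η k m := by
  simp [concatDT, List.range_succ]

lemma length_concatDT (k : ℕ) (m : ℕ → List A) :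
    (concatDT η k m).length = sumLen η k m := by
  induction k with
  | zero => rfl
  | succ k ih => rw [concatDT_succ, sumLen, Finset.sum_range_succ, List.length_append, ih, sumLen,
      Nat.add_comm]

lemma dtDigits_succ (k : ℕ) (m : ℕ → List A) :
    dtDigits (k + 1) m = (m k).length :: dtDigits k m := by
  simp [dtDigits, List.range_succ]

end Substitution

section Automaton

variable {η : A → List A} {k : ℕ} {m : ℕ → List A} {a : ℕ → A} {x : A}

lemma run_cons_of_prefix {l : List A} {b : A} (h : l ++ [b] <+: η x) (w : List ℕ) :
    run η (l.length :: w) x = run η w b := by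
  obtain ⟨t, ht⟩ := h
  have hl : l.length < (η x).length := by rw [← ht]; simp
  simp only [run, hl, dite_true]
  congr
  simp [← ht]

lemma AdmSeq.of_succ (h : AdmSeq η (k + 1) m a x) : AdmSeq η k m a (a k) :=
  ⟨fun i hi => h.1 i (by omega),
    fun hk => by simpa [Nat.sub_add_cancel hk] using h.1 (k - 1) (by omega)⟩

lemma AdmSeq.prefix_top (h : AdmSeq η (k + 1) m a x) : m k ++ [a k] <+: η x := by
  simpa using h.2 le_add_self

lemma AdmSeq.run_dtDigits (h : AdmSeq η (k + 1) m a x) :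
    run η (dtDigits (k + 1) m) x = some (a 0) := by
  induction k generalizing x with
  | zero => rw [dtDigits_succ, run_cons_of_prefix h.prefix_top]; rfl
  | succ k ih => rw [dtDigits_succ, run_cons_of_prefix h.prefix_top, ih h.of_succ]

lemma AdmSeq.concatDT_append_prefix (h : AdmSeq η (k + 1) m a x) :
    concatDT η (k + 1) m ++ [a 0] <+: iterW η (k + 1) [x] := by
  induction k generalizing x with
  | zero => simpa [concatDT, iterW, substW] using h.prefix_top
  | succ k ih =>
    rw [concatDT_succ, List.append_assoc, iterW_succ_singleton]
    refine List.IsPrefix.trans ?_ (iterW_isPrefix η (k + 1) h.prefix_top)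
    rw [iterW_append]
    exact (List.prefix_append_right_inj _).mpr (ih h.of_succ)

lemma AdmSeq.run_dtDigits_eq_getElem (h : AdmSeq η k m a x) (hk : 0 < k) :
    ∃ hlt : sumLen η k m < (iterW η k [x]).length,
      run η (dtDigits k m) x = some (iterW η k [x])[sumLen η k m] := by
  obtain ⟨k, rfl⟩ : ∃ k', k = k' + 1 := ⟨k - 1, by omega⟩
  have hp := h.concatDT_append_prefix
  have hi : (concatDT η (k + 1) m).length < (concatDT η (k + 1) m ++ [a 0]).length := by simp
  simp_rw [← length_concatDT]
  exact ⟨hi.trans_le hp.length_le, by rw [h.run_dtDigits, ← hp.getElem hi]; simp⟩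

end Automaton

section Periodicity

variable {η : A → List A} {p : ℕ} {u : ℤ → A}

def IsRightPrefix (u : ℤ → A) (w : List A) : Prop :=
  ∀ j (hj : j < w.length), w[j] = u j

def IsLeftSuffix (u : ℤ → A) (w : List A) : Prop :=
  ∀ j (hj : j < w.length), w[j] = u (j - w.length)

lemma RightPer.isRightPrefix_iterW (hr : RightPer η p u) {w : List A}
    (hw : IsRightPrefix u w) :
    IsRightPrefix u (iterW η p w) := by
  cases hlen : w.length with
  | zero => simp [List.length_eq_zero_iff.mp hlen, iterW_nil, IsRightPrefix]
  | succ n =>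
    obtain rfl : w = List.ofFn (fun i : Fin (n + 1) => u i) :=
      List.ext_getElem (by simp [hlen]) fun i hi _ => by rw [List.getElem_ofFn, hw i hi]
    intro j hj
    exact Option.some_inj.mp ((List.getElem?_eq_getElem hj).symm.trans (hr n j hj))

lemma LeftPer.isLeftSuffix_iterW (hl : LeftPer η p u) {w : List A} (hw : IsLeftSuffix u w) :
    IsLeftSuffix u (iterW η p w) := by
  cases hlen : w.length with
  | zero => simp [List.length_eq_zero_iff.mp hlen, iterW_nil, IsLeftSuffix]
  | succ n =>
    obtain rfl : w = List.ofFn (fun i : Fin (n + 1) => u ((i : ℤ) - (n + 1))) :=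
      List.ext_getElem (by simp [hlen]) fun i hi _ => by
        rw [List.getElem_ofFn, hw i hi, hlen]; push_cast; rfl
    intro j hj
    exact Option.some_inj.mp ((List.getElem?_eq_getElem hj).symm.trans (hl n j hj))

lemma RightPer.isRightPrefix_iterW_mul (hr : RightPer η p u) (t : ℕ) :
    IsRightPrefix u (iterW η (p * t) [u 0]) := by
  rw [iterW_mul]
  refine Function.Iterate.rec (IsRightPrefix u) ?_ (fun w hw => hr.isRightPrefix_iterW hw) t
  intro j hj
  obtain rfl : j = 0 := by simpa using hj
  rfl

lemma LeftPer.isLeftSuffix_iterW_mul (hl : LeftPer η p u) (t : ℕ) :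
    IsLeftSuffix u (iterW η (p * t) [u (-1)]) := by
  rw [iterW_mul]
  refine Function.Iterate.rec (IsLeftSuffix u) ?_ (fun w hw => hl.isLeftSuffix_iterW hw) t
  intro j hj
  obtain rfl : j = 0 := by simpa using hj
  rfl

end Periodicity

theorem periodic_point_automatic_general (η : A → List A)
    (p : ℕ) (u : ℤ → A)
    (hu : TwoSidedPerPoint η p u) :
    ∀ (n : ℤ) (w : List ℕ), RepSpec η p u n w → runSeed η u w = some (u n) := by
  obtain ⟨hp, hright, hleft, -, -⟩ := hu
  rintro n w (⟨rfl, rfl⟩ | ⟨rfl, rfl⟩ | ⟨-, k, m, a, ⟨⟨t, rfl⟩, hpk, hadm, -, hsum⟩, rfl⟩ |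
    ⟨-, k, m, a, ⟨⟨t, rfl⟩, hpk, hadm, -, hsum⟩, rfl⟩)
  · rfl
  · rfl
  · obtain ⟨hlt, hrun⟩ := hadm.run_dtDigits_eq_getElem (by omega)
    rw [runSeed, if_pos rfl, hrun, hright.isRightPrefix_iterW_mul t _ hlt, hsum]
  · obtain ⟨hlt, hrun⟩ := hadm.run_dtDigits_eq_getElem (by omega)
    rw [runSeed, if_neg one_ne_zero, if_pos rfl, hrun, hleft.isLeftSuffix_iterW_mul t _ hlt,
      hsum, add_sub_cancel_right]

/-- Theorem: periodic points are automatic. For a two-sided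
periodic point `u` of `η` with growing seed `s = u₋₁|u₀`, one has
`u_n = A_{η,s}(rep_u(n))` for every `n ∈ ℤ`. -/
theorem periodic_point_automatic [Finite A] (η : A → List A)
    (hη : IsSubstitution η) (p : ℕ) (u : ℤ → A)
    (hu : TwoSidedPerPoint η p u) :
    ∀ (n : ℤ) (w : List ℕ), RepSpec η p u n w → runSeed η u w = some (u n) :=
  periodic_point_automatic_general η p u hu
end

section
/- If η is a d-uniform substitution and u a two-sided periodic point with growing seed and period p, then for every n ∈ ℤ \ {−1,0}, the u-quotient and u-remainder of n are exactly the quotient and remainder of the Euclidean division of n by d^p (with remainder in {0,…,d^p − 1}). -/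
open Filter List

variable {A : Type*}

lemma substW_len (η : A → List A) {d : ℕ} (hd : ∀ c, (η c).length = d) (w : List A) :
    (substW η w).length = d * w.length := by
  induction w with
  | nil => simp [substW]
  | cons a t ih =>
    have : substW η (a :: t) = η a ++ substW η t := by simp [substW]
    rw [this]
    simp only [List.length_append, ih, hd, List.length_cons]
    ring

lemma iterW_len (η : A → List A) {d : ℕ} (hd : ∀ c, (η c).length = d) (j : ℕ)
    (w : List A) : (iterW η j w).length = d ^ j * w.length := by
  induction j generalizing w with
  | zero => simp [iterW]
  | succ j ih =>
    rw [iterW, Function.iterate_succ_apply]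
    have := ih (substW η w)
    rw [iterW] at this
    rw [this, substW_len η hd, pow_succ]
    ring

lemma digit_lt (η : A → List A) {d : ℕ} (hd : ∀ c, (η c).length = d)
    {k : ℕ} {m : ℕ → List A} {a : ℕ → A} {x : A} (h : AdmSeq η k m a x)
    {j : ℕ} (hj : j < k) : (m j).length + 1 ≤ d := by
  rcases Nat.lt_or_ge (j + 1) k with h1 | h2
  · have := (h.1 j h1).length_le
    simpa [hd] using this
  · have hj' : j = k - 1 := by omega
    have := (h.2 (by omega)).length_le
    rw [← hj'] at this
    simpa [hd] using this

lemma rem_lt (η : A → List A) {d : ℕ} (hd : ∀ c, (η c).length = d)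
    {k : ℕ} {m : ℕ → List A} {a : ℕ → A} {x : A} (h : AdmSeq η k m a x)
    {p : ℕ} (hp : p ≤ k) : sumLen η p m < d ^ p := by
  have key : ∀ q, q ≤ k → ∑ j ∈ Finset.range q, d ^ j * (m j).length < d ^ q := by
    intro q hq
    induction q with
    | zero => simp
    | succ q ih =>
      have hb := digit_lt η hd h (j := q) (by omega)
      have h1 := ih (by omega)
      rw [Finset.sum_range_succ, pow_succ]
      calc (∑ j ∈ Finset.range q, d ^ j * (m j).length) + d ^ q * (m q).length
          < d ^ q + d ^ q * (m q).length := by omega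
        _ = d ^ q * ((m q).length + 1) := by ring
        _ ≤ d ^ q * d := Nat.mul_le_mul_left _ hb
  have : sumLen η p m = ∑ j ∈ Finset.range p, d ^ j * (m j).length := by
    unfold sumLen
    exact Finset.sum_congr rfl fun j _ => by rw [iterW_len η hd]
  rw [this]
  exact key p hp

lemma sumLen_split (η : A → List A) {d : ℕ} (hd : ∀ c, (η c).length = d)
    {k p : ℕ} (hp : p ≤ k) (m : ℕ → List A) :
    (sumLen η k m : ℤ) = (d : ℤ) ^ p * uQuotPos η p k m + sumLen η p m := by
  have hsum : ∀ q, (sumLen η q m : ℤ) =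
      ∑ j ∈ Finset.range q, ((d : ℤ) ^ j * (m j).length) := by
    intro q
    unfold sumLen
    push_cast
    exact Finset.sum_congr rfl fun j _ => by rw [iterW_len η hd]; push_cast; ring
  have hq : uQuotPos η p k m = ∑ j ∈ Finset.range (k - p), ((d : ℤ) ^ j * (m (j + p)).length) := by
    unfold uQuotPos
    exact Finset.sum_congr rfl fun j _ => by rw [iterW_len η hd]; push_cast; ring
  have hk : k = p + (k - p) := by omega
  have hsplit : ∑ j ∈ Finset.range k, ((d : ℤ) ^ j * (m j).length) =
      (∑ j ∈ Finset.range p, ((d : ℤ) ^ j * (m j).length)) +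
      ∑ j ∈ Finset.range (k - p), ((d : ℤ) ^ (p + j) * (m (p + j)).length) := by
    conv_lhs => rw [hk]
    rw [Finset.sum_range_add]
  rw [hsum k, hsum p, hq, hsplit, Finset.mul_sum, add_comm]
  congr 1
  exact Finset.sum_congr rfl fun j _ => by rw [pow_add, add_comm j p]; ring

lemma div_mod_of (q r b n : ℤ) (hb : 0 < b) (hr0 : 0 ≤ r) (hrb : r < b)
    (hn : n = b * q + r) : Int.ediv n b = q ∧ Int.emod n b = r := by
  constructor
  · have : Int.ediv n b = n / b := rfl
    rw [this, hn]
    rw [show b * q + r = r + b * q by ring, Int.add_mul_ediv_left r q (by omega)]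
    rw [Int.ediv_eq_zero_of_lt hr0 hrb, zero_add]
  · have : Int.emod n b = n % b := rfl
    rw [this, hn, show b * q + r = r + b * q by ring, Int.add_mul_emod_self_left]
    exact Int.emod_eq_of_lt hr0 hrb

/-- If `η` is `d`-uniform, the `u`-quotient and `u`-remainder
of `n ∈ ℤ \ {-1,0}` are the quotient and remainder of the Euclidean division of
`n` by `d^p`. -/
theorem uniform_quotient_remainder [Finite A] (η : A → List A)
    (hη : IsSubstitution η) (d : ℕ) (hd : ∀ c, (η c).length = d)
    (p : ℕ) (u : ℤ → A) (hu : TwoSidedPerPoint η p u) (n : ℤ) :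
    (∀ (k : ℕ) (m : ℕ → List A) (a : ℕ → A), 1 ≤ n →
      PosSpec η p (u 0) n k m a →
      uQuotPos η p k m = Int.ediv n ((d : ℤ) ^ p) ∧
      (sumLen η p m : ℤ) = Int.emod n ((d : ℤ) ^ p)) ∧
    (∀ (k : ℕ) (m : ℕ → List A) (a : ℕ → A), n ≤ -2 →
      NegSpec η p (u (-1)) n k m a →
      uQuotPos η p k m - (iterW η (k - p) [u (-1)]).length =
        Int.ediv n ((d : ℤ) ^ p) ∧
      (sumLen η p m : ℤ) = Int.emod n ((d : ℤ) ^ p)) := by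
  obtain ⟨hp1, _, _, _, _⟩ := hu
  have hd1 : 1 ≤ d := by
    have := hη.1 (u 0)
    have h0 := hd (u 0)
    rcases Nat.eq_zero_or_pos d with h | h
    · exfalso; apply this; rw [← List.length_eq_zero_iff, h0, h]
    · exact h
  have hb : (0 : ℤ) < (d : ℤ) ^ p := by positivity
  constructor
  · rintro k m a hn ⟨hpk, hpk', hadm, _, hsum⟩
    have hr0 : (0 : ℤ) ≤ (sumLen η p m : ℤ) := by positivity
    have hrb : ((sumLen η p m : ℤ)) < (d : ℤ) ^ p := by
      exact_mod_cast (by exact_mod_cast rem_lt η hd hadm hpk' : (sumLen η p m : ℤ) < ((d ^ p : ℕ) : ℤ))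
    have hn' : n = (d : ℤ) ^ p * uQuotPos η p k m + sumLen η p m := by
      rw [← hsum, sumLen_split η hd hpk' m]
    exact ⟨(div_mod_of _ _ _ _ hb hr0 hrb hn').1.symm, (div_mod_of _ _ _ _ hb hr0 hrb hn').2.symm⟩
  · rintro k m a hn ⟨hpk, hpk', hadm, _, hsum⟩
    have hr0 : (0 : ℤ) ≤ (sumLen η p m : ℤ) := by positivity
    have hrb : ((sumLen η p m : ℤ)) < (d : ℤ) ^ p := by
      exact_mod_cast (by exact_mod_cast rem_lt η hd hadm hpk' : (sumLen η p m : ℤ) < ((d ^ p : ℕ) : ℤ))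
    have hlen : ((iterW η (k - p) [u (-1)]).length : ℤ) = (d : ℤ) ^ (k - p) := by
      rw [iterW_len η hd]; push_cast; simp
    have hlenk : ((iterW η k [u (-1)]).length : ℤ) = (d : ℤ) ^ k := by
      rw [iterW_len η hd]; push_cast; simp
    have hn' : n = (d : ℤ) ^ p *
        (uQuotPos η p k m - (iterW η (k - p) [u (-1)]).length) + sumLen η p m := by
      have : (sumLen η k m : ℤ) = n + (d : ℤ) ^ k := by rw [← hlenk]; exact_mod_cast hsum
      rw [sumLen_split η hd hpk' m] at this
      rw [hlen]
      have hpow : (d : ℤ) ^ p * (d : ℤ) ^ (k - p) = (d : ℤ) ^ k := by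
        rw [← pow_add]; congr 1; omega
      linarith [this, hpow]
    exact ⟨(div_mod_of _ _ _ _ hb hr0 hrb hn').1.symm, (div_mod_of _ _ _ _ hb hr0 hrb hn').2.symm⟩
end
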